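/- arXiv:2006.13169 — 2 statements merged into one kernel-verified Lean document; each statement's English description precedes it below -/
import Mathlib

section
/- Let S, A be finite, and let d be a probability distribution on S × A that is stationary for (P, π), i.e. d(s',a') = Σ_{s,a} d(s,a) P(s'|s,a) π(a'|s'). Then the Bellman operator B^π is a γ-contraction in the norm ‖Q‖_d := (E_{(s,a)∼d}[Q(s,a)²])^{1/2}: for all Q, Q' : S × A → ℝ, ‖B^π Q − B^π Q'‖_d ≤ γ ‖Q − Q'‖_d. -/
/-!
Write `K` for the state–action transition kernel `K((s,a),(s',a')) = P(s'|s,a) π(a'|s')`, so that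
`B^π Q − B^π Q' = γ K (Q − Q')`. Each row of `K` is a probability vector, so Jensen's inequality
gives `(K f)(x)² ≤ K (f²)(x)`; averaging against `d` and using `d K = d` yields `‖K f‖_d ≤ ‖f‖_d`.
-/

open Finset

section MarkovKernel

variable {ι : Type*} [Fintype ι]

theorem sq_sum_mul_le_sum_mul_sq {w f : ι → ℝ} (hw : ∀ i, 0 ≤ w i) (hw1 : ∑ i, w i = 1) :
    (∑ i, w i * f i) ^ 2 ≤ ∑ i, w i * f i ^ 2 := by
  simpa only [smul_eq_mul] using
    (even_two.convexOn_pow (𝕜 := ℝ)).map_sum_le (fun i _ => hw i) hw1 (fun i _ => Set.mem_univ (f i))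

theorem sum_mul_sq_kernel_apply_le_of_stationary {K : ι → ι → ℝ} {d : ι → ℝ}
    (hK : ∀ x y, 0 ≤ K x y) (hK1 : ∀ x, ∑ y, K x y = 1)
    (hd : ∀ x, 0 ≤ d x) (hstat : ∀ y, d y = ∑ x, d x * K x y) (f : ι → ℝ) :
    ∑ x, d x * (∑ y, K x y * f y) ^ 2 ≤ ∑ y, d y * f y ^ 2 :=
  calc ∑ x, d x * (∑ y, K x y * f y) ^ 2
      ≤ ∑ x, d x * ∑ y, K x y * f y ^ 2 :=
        sum_le_sum fun x _ => mul_le_mul_of_nonneg_left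
          (sq_sum_mul_le_sum_mul_sq (hK x) (hK1 x)) (hd x)
    _ = ∑ y, (∑ x, d x * K x y) * f y ^ 2 := by
        simp only [mul_sum, sum_mul, mul_assoc]
        exact sum_comm
    _ = ∑ y, d y * f y ^ 2 := by simp only [← hstat]

end MarkovKernel

section StateAction

variable {S A : Type*}

def stateActionKernel (P : S → A → S → ℝ) (π : S → A → ℝ) (x y : S × A) : ℝ :=
  P x.1 x.2 y.1 * π y.1 y.2

theorem sum_sum_mul_eq_sum_stateActionKernel_mul [Fintype S] [Fintype A] (P : S → A → S → ℝ) (π : S → A → ℝ)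
    (g : S × A → ℝ) (x : S × A) :
    ∑ s', ∑ a', P x.1 x.2 s' * π s' a' * g (s', a') = ∑ y, stateActionKernel P π x y * g y :=
  (Fintype.sum_prod_type fun y => stateActionKernel P π x y * g y).symm

theorem stateActionKernel_nonneg {P : S → A → S → ℝ} {π : S → A → ℝ}
    (hP : ∀ s a s', 0 ≤ P s a s') (hπ : ∀ s a, 0 ≤ π s a) (x y : S × A) :
    0 ≤ stateActionKernel P π x y :=
  mul_nonneg (hP _ _ _) (hπ _ _)

theorem sum_stateActionKernel [Fintype S] [Fintype A] {P : S → A → S → ℝ} {π : S → A → ℝ}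
    (hP : ∀ s a, ∑ s', P s a s' = 1) (hπ : ∀ s, ∑ a, π s a = 1) (x : S × A) :
    ∑ y, stateActionKernel P π x y = 1 := by
  simp only [stateActionKernel, Fintype.sum_prod_type, ← mul_sum, hπ, mul_one, hP]

end StateAction

theorem bellman_contraction_stationary_general
    {S A : Type*} [Fintype S] [Fintype A]
    (P : S → A → S → ℝ) (π : S → A → ℝ) (r : S → A → ℝ) (γ : ℝ)
    (hγ0 : 0 ≤ γ)
    (hPnn : ∀ s a s', 0 ≤ P s a s') (hPsum : ∀ s a, ∑ s', P s a s' = 1)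
    (hπnn : ∀ s a, 0 ≤ π s a) (hπsum : ∀ s, ∑ a, π s a = 1)
    (d : S × A → ℝ) (hdnn : ∀ x, 0 ≤ d x)
    (hstat : ∀ y : S × A, d y = ∑ x : S × A, d x * P x.1 x.2 y.1 * π y.1 y.2)
    (Q Q' : S × A → ℝ) :
    Real.sqrt (∑ x : S × A, d x *
        ((r x.1 x.2 + γ * ∑ s', ∑ a', P x.1 x.2 s' * π s' a' * Q (s', a')) -
         (r x.1 x.2 + γ * ∑ s', ∑ a', P x.1 x.2 s' * π s' a' * Q' (s', a'))) ^ 2)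
      ≤ γ * Real.sqrt (∑ x : S × A, d x * (Q x - Q' x) ^ 2) := by
  set K := stateActionKernel P π
  have hdiff : ∀ x : S × A,
      (r x.1 x.2 + γ * ∑ s', ∑ a', P x.1 x.2 s' * π s' a' * Q (s', a')) -
        (r x.1 x.2 + γ * ∑ s', ∑ a', P x.1 x.2 s' * π s' a' * Q' (s', a')) =
      γ * ∑ y, K x y * (Q y - Q' y) := fun x => by
    simp only [sum_sum_mul_eq_sum_stateActionKernel_mul, mul_sub, sum_sub_distrib]
    ring
  have hjensen := sum_mul_sq_kernel_apply_le_of_stationary (stateActionKernel_nonneg hPnn hπnn)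
    (sum_stateActionKernel hPsum hπsum) hdnn
    (fun y => by simpa only [K, stateActionKernel, mul_assoc] using hstat y) (fun y => Q y - Q' y)
  simp only [hdiff, mul_pow, mul_left_comm _ (γ ^ 2), ← mul_sum]
  rw [Real.sqrt_mul (sq_nonneg γ), Real.sqrt_sq hγ0]
  exact mul_le_mul_of_nonneg_left (Real.sqrt_le_sqrt hjensen) hγ0

/-- If d is stationary for (P, π), the Bellman evaluation operator B^π is a γ-contraction
with respect to the d-weighted ℓ₂ norm. -/
theorem bellman_contraction_stationary
    {S A : Type*} [Fintype S] [Fintype A]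
    (P : S → A → S → ℝ) (π : S → A → ℝ) (r : S → A → ℝ) (γ : ℝ)
    (hγ0 : 0 ≤ γ) (hγ1 : γ < 1)
    (hPnn : ∀ s a s', 0 ≤ P s a s') (hPsum : ∀ s a, ∑ s', P s a s' = 1)
    (hπnn : ∀ s a, 0 ≤ π s a) (hπsum : ∀ s, ∑ a, π s a = 1)
    (d : S × A → ℝ) (hdnn : ∀ x, 0 ≤ d x) (hdsum : ∑ x, d x = 1)
    (hstat : ∀ y : S × A, d y = ∑ x : S × A, d x * P x.1 x.2 y.1 * π y.1 y.2)
    (Q Q' : S × A → ℝ) :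
    Real.sqrt (∑ x : S × A, d x *
        ((r x.1 x.2 + γ * ∑ s', ∑ a', P x.1 x.2 s' * π s' a' * Q (s', a')) -
         (r x.1 x.2 + γ * ∑ s', ∑ a', P x.1 x.2 s' * π s' a' * Q' (s', a'))) ^ 2)
      ≤ γ * Real.sqrt (∑ x : S × A, d x * (Q x - Q' x) ^ 2) :=
  bellman_contraction_stationary_general P π r γ hγ0 hPnn hPsum hπnn hπsum d hdnn hstat Q Q'
end

section
/- Let f : (0,∞) → ℝ be convex and differentiable, and let P, Q be probability measures on a finite set X with Q(x) > 0 for all x. Then for any function w : X → (0,∞), Σ_x Q(x) f(P(x)/Q(x)) ≥ Σ_x P(x) f'(w(x)) − Σ_x Q(x) f*(f'(w(x))), where f* is the convex conjugate of f, and equality holds when w(x) = P(x)/Q(x) for all x. -/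
/-!
Since `f` is convex, its graph lies above the tangent at `w`, which for `t ≥ 0` reads
`t f'(w) - f*(f'(w)) ≤ f t` (Fenchel–Young, with `f*(f'(w)) = w f'(w) - f(w)`), with equality
at `t = w`. Taking `t = P(x)/Q(x)`, multiplying by `Q(x)` and summing over `x` gives the bound.
-/

namespace ConvexOn

variable {S : Set ℝ} {f : ℝ → ℝ} {f' x y : ℝ}

theorem add_deriv_mul_sub_le (hfc : ConvexOn ℝ S f) (hx : x ∈ S) (hy : y ∈ S)
    (hf : HasDerivAt f f' x) : f x + f' * (y - x) ≤ f y := by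
  rcases lt_trichotomy y x with hyx | rfl | hxy
  · have hslope := hfc.slope_le_of_hasDerivAt hy hx hyx hf
    rw [slope_def_field, div_le_iff₀ (sub_pos.2 hyx)] at hslope
    linarith
  · simp
  · have hslope := hfc.le_slope_of_hasDerivAt hx hy hxy hf
    rw [slope_def_field, le_div_iff₀ (sub_pos.2 hxy)] at hslope
    linarith

theorem mul_deriv_sub_le_mul_apply_div {p q : ℝ} (hfc : ConvexOn ℝ S f) (hx : x ∈ S)
    (hpq : p / q ∈ S) (hq : 0 < q) (hf : HasDerivAt f f' x) :
    p * f' - q * (x * f' - f x) ≤ q * f (p / q) := by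
  have htangent := mul_le_mul_of_nonneg_left (hfc.add_deriv_mul_sub_le hx hpq hf) hq.le
  have hp : q * (p / q) = p := mul_div_cancel₀ p hq.ne'
  linear_combination htangent - f' * hp

end ConvexOn

theorem f_divergence_variational_bound_general
    {X : Type*} [Fintype X]
    (f f' fstar : ℝ → ℝ)
    (hconv : ConvexOn ℝ (Set.Ici 0) f)
    (hderiv : ∀ u : ℝ, 0 < u → HasDerivAt f (f' u) u)
    (hfstar : ∀ u : ℝ, 0 < u → fstar (f' u) = u * f' u - f u)
    (P Q : X → ℝ)
    (hPnn : ∀ x, 0 ≤ P x)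
    (hQpos : ∀ x, 0 < Q x)
    (w : X → ℝ) (hw : ∀ x, 0 < w x) :
    (∑ x, Q x * f (P x / Q x)
        ≥ ∑ x, P x * f' (w x) - ∑ x, Q x * fstar (f' (w x))) ∧
      ((∀ x, w x = P x / Q x) →
        ∑ x, Q x * f (P x / Q x)
          = ∑ x, P x * f' (w x) - ∑ x, Q x * fstar (f' (w x))) := by
  refine ⟨?_, fun hwPQ => ?_⟩ <;> rw [← Finset.sum_sub_distrib]
  · refine Finset.sum_le_sum fun x _ => ?_
    rw [hfstar _ (hw x)]
    exact hconv.mul_deriv_sub_le_mul_apply_div (hw x).le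
      (div_nonneg (hPnn x) (hQpos x).le) (hQpos x) (hderiv _ (hw x))
  · refine Finset.sum_congr rfl fun x _ => ?_
    rw [hfstar _ (hw x), hwPQ x]
    linear_combination f' (P x / Q x) * mul_div_cancel₀ (P x) (hQpos x).ne'

/-- Variational (Nguyen–Wainwright–Jordan) lower bound on f-divergences over a finite set,
with equality at the density ratio w = P/Q. -/
theorem f_divergence_variational_bound
    {X : Type*} [Fintype X]
    (f f' fstar : ℝ → ℝ)
    (hconv : ConvexOn ℝ (Set.Ici 0) f)
    (hderiv : ∀ u : ℝ, 0 < u → HasDerivAt f (f' u) u)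
    (hfstar : ∀ u : ℝ, 0 < u → fstar (f' u) = u * f' u - f u)
    (P Q : X → ℝ)
    (hPnn : ∀ x, 0 ≤ P x) (hPsum : ∑ x, P x = 1)
    (hQpos : ∀ x, 0 < Q x) (hQsum : ∑ x, Q x = 1)
    (w : X → ℝ) (hw : ∀ x, 0 < w x) :
    (∑ x, Q x * f (P x / Q x)
        ≥ ∑ x, P x * f' (w x) - ∑ x, Q x * fstar (f' (w x))) ∧
      ((∀ x, w x = P x / Q x) →
        ∑ x, Q x * f (P x / Q x)
          = ∑ x, P x * f' (w x) - ∑ x, Q x * fstar (f' (w x))) :=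
  f_divergence_variational_bound_general f f' fstar hconv hderiv hfstar P Q hPnn hQpos w hw
end
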